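/- Let N ≥ 2, k ≥ 1. Let [a] be an S_k-orbit of (Z/N)^k with standard (weakly decreasing) representative â = ((N-1)^{a_{N-1}},...,1^{a_1},0^{a_0}), and let [b] be the orbit of (1^m,0^{k-m}). For an orbit [c], the number M of S_k-orbits of T([a],[b],[c]) = {(x,y,z) ∈ [a]×[b]×[c] : x+y=z} equals 1 if and only if there exist integers m_0,...,m_{N-1} with 0 ≤ m_i ≤ a_i for each i, m_0+...+m_{N-1} = m, and the standard representative of [c] equals ((N-1)^{a_{N-1}-m_{N-1}+m_{N-2}},...,1^{a_1-m_1+m_0},0^{a_0-m_0+m_{N-1}}); otherwise M = 0. -/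
import Mathlib


/-- The `S_k`-orbit of a `k`-tuple with entries in `ZMod N`. -/
def orb {N k : ℕ} (x : Fin k → ZMod N) : Set (Fin k → ZMod N) :=
  {y | ∃ σ : Equiv.Perm (Fin k), y = x ∘ σ}

/-- The set `T([a],[b],[c])` of triples `(x,y,z) ∈ [a]×[b]×[c]` with `x + y = z`. -/
def Triples {N k : ℕ} (a b c : Fin k → ZMod N) :=
  {p : (Fin k → ZMod N) × (Fin k → ZMod N) × (Fin k → ZMod N) //
    p.1 ∈ orb a ∧ p.2.1 ∈ orb b ∧ p.2.2 ∈ orb c ∧ p.1 + p.2.1 = p.2.2}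

/-- The number of `S_k`-orbits of `T([a],[b],[c])` under the diagonal action. -/
noncomputable def Mcoef {N k : ℕ} (a b c : Fin k → ZMod N) : ℕ :=
  Nat.card (Quot (fun p q : Triples a b c =>
    ∃ σ : Equiv.Perm (Fin k),
      q.1.1 = p.1.1 ∘ σ ∧ q.1.2.1 = p.1.2.1 ∘ σ ∧ q.1.2.2 = p.1.2.2 ∘ σ))

/-- The number of entries of `x` equal to `v`; the multiplicity vector of these
counts determines the standard (weakly decreasing) representative of `[x]`. -/
def cnt {N k : ℕ} (x : Fin k → ZMod N) (v : ZMod N) : ℕ :=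
  (Finset.univ.filter fun i => x i = v).card

namespace Stmt2Aux

open Finset

variable {N k m : ℕ}

/-- Joint count: number of positions where `x` equals `v` and `y` equals `1`. -/
def jcnt (x y : Fin k → ZMod N) (v : ZMod N) : ℕ :=
  (Finset.univ.filter fun i => x i = v ∧ y i = 1).card

lemma cnt_comp (x : Fin k → ZMod N) (σ : Equiv.Perm (Fin k)) (v : ZMod N) :
    cnt (x ∘ σ) v = cnt x v := by
  unfold cnt
  apply Finset.card_bij' (fun i _ => σ i) (fun i _ => σ.symm i) <;> simp

lemma cnt_orb {x a : Fin k → ZMod N} (hx : x ∈ orb a) (v : ZMod N) :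
    cnt x v = cnt a v := by
  obtain ⟨σ, rfl⟩ := hx
  exact cnt_comp a σ v

lemma exists_perm_of_cnt {α : Type*} [DecidableEq α] (f g : Fin k → α)
    (h : ∀ v, (Finset.univ.filter fun i => f i = v).card
      = (Finset.univ.filter fun i => g i = v).card) :
    ∃ σ : Equiv.Perm (Fin k), g = f ∘ σ := by
  have e : ∀ v : α, {i // g i = v} ≃ {i // f i = v} := fun v =>
    Fintype.equivOfCardEq (by
      simp only [Fintype.card_subtype]
      exact (h v).symm)
  refine ⟨(Equiv.sigmaFiberEquiv g).symm.trans
    ((Equiv.sigmaCongrRight e).trans (Equiv.sigmaFiberEquiv f)), ?_⟩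
  funext i
  simp only [Function.comp, Equiv.trans_apply, Equiv.sigmaFiberEquiv,
    Equiv.sigmaCongrRight, Equiv.coe_fn_mk, Equiv.coe_fn_symm_mk]
  exact (e (g i) ⟨i, rfl⟩).2.symm

lemma mem_orb_of_cnt {x a : Fin k → ZMod N} (h : ∀ v, cnt a v = cnt x v) :
    x ∈ orb a :=
  exists_perm_of_cnt a x h

lemma card_lt_val (hm : m ≤ k) :
    (Finset.univ.filter fun i : Fin k => (i : ℕ) < m).card = m := by
  rw [← Fintype.card_subtype]
  rw [Fintype.card_congr
    (⟨fun i => ⟨i.1.1, i.2⟩, fun j => ⟨⟨j.1, lt_of_lt_of_le j.2 hm⟩, j.2⟩,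
     fun i => by simp, fun j => by simp⟩ : {i : Fin k // (i : ℕ) < m} ≃ Fin m)]
  exact Fintype.card_fin m

lemma jcnt_le (x y : Fin k → ZMod N) (v : ZMod N) : jcnt x y v ≤ cnt x v := by
  apply Finset.card_le_card
  intro i hi
  simp only [mem_filter] at *
  exact ⟨hi.1, hi.2.1⟩

lemma cnt_split (x y : Fin k → ZMod N) (hy : ∀ i, y i = 0 ∨ y i = 1)
    (h10 : (1 : ZMod N) ≠ 0) (v : ZMod N) :
    cnt x v = (Finset.univ.filter fun i => x i = v ∧ y i = 0).card + jcnt x y v := by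
  unfold cnt jcnt
  rw [← Finset.card_union_of_disjoint]
  · congr 1
    ext i
    simp only [mem_union, mem_filter, mem_univ, true_and]
    rcases hy i with h | h <;> simp [h, h10] <;> tauto
  · rw [Finset.disjoint_left]
    intro i hi hi'
    simp only [mem_filter] at hi hi'
    rw [hi.2.2] at hi'
    exact h10 hi'.2.2.symm

lemma cnt_add (x y : Fin k → ZMod N) (hy : ∀ i, y i = 0 ∨ y i = 1)
    (h10 : (1 : ZMod N) ≠ 0) (v : ZMod N) :
    cnt (x + y) v = (cnt x v - jcnt x y v) + jcnt x y (v - 1) := by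
  have hsplit := cnt_split x y hy h10 v
  have : cnt (x + y) v
      = (Finset.univ.filter fun i => x i = v ∧ y i = 0).card + jcnt x y (v - 1) := by
    unfold cnt jcnt
    rw [← Finset.card_union_of_disjoint]
    · congr 1
      ext i
      simp only [mem_union, mem_filter, mem_univ, true_and, Pi.add_apply]
      constructor
      · intro h
        rcases hy i with h0 | h1
        · left; rw [h0, add_zero] at h; exact ⟨h, h0⟩
        · right; rw [h1] at h; exact ⟨by rw [← h]; ring, h1⟩
      · rintro (⟨h1, h2⟩ | ⟨h1, h2⟩) <;> rw [h1, h2] <;> ring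
    · rw [Finset.disjoint_left]
      intro i hi hi'
      simp only [mem_filter] at hi hi'
      rw [hi.2.2] at hi'
      exact h10 hi'.2.2.symm
  omega

lemma sum_jcnt (x y : Fin k → ZMod N) [NeZero N] :
    ∑ v, jcnt x y v = cnt y 1 := by
  unfold cnt jcnt
  rw [Finset.card_eq_sum_card_fiberwise (f := x) (t := Finset.univ) (fun i _ => mem_univ _)]
  congr 1
  funext v
  rw [Finset.filter_filter]
  congr 1
  apply Finset.filter_congr
  intro i _
  exact and_comm

lemma ms_unique [NeZero N] {A : ZMod N → ℕ} {ms ms' : ZMod N → ℕ}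
    (h1 : ∀ v, ms v ≤ A v) (h1' : ∀ v, ms' v ≤ A v)
    (h2 : ∑ v, ms v = ∑ v, ms' v)
    (h3 : ∀ v, A v - ms v + ms (v - 1) = A v - ms' v + ms' (v - 1)) : ms = ms' := by
  set d : ZMod N → ℤ := fun v => (ms' v : ℤ) - ms v with hd
  have key : ∀ v, d v = d (v - 1) := by
    intro v
    have h := h3 v
    have := h1 v; have := h1' v
    simp only [hd]
    omega
  have step : ∀ (n : ℕ) (v : ZMod N), d (v - n) = d v := by
    intro n
    induction n with
    | zero => simp
    | succ n ih =>
      intro v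
      have : v - (n + 1 : ℕ) = (v - n) - 1 := by push_cast; ring
      rw [this, ← key (v - n), ih v]
  have const : ∀ v, d v = d 0 := by
    intro v
    have := step v.val v
    rw [ZMod.natCast_val, ZMod.cast_id, sub_self] at this
    exact this.symm
  have hsum : ∑ v, d v = 0 := by
    simp only [hd, Finset.sum_sub_distrib]
    rw [sub_eq_zero]
    exact_mod_cast h2.symm
  have hN0 : (N : ℤ) * d 0 = 0 := by
    rw [← hsum]
    rw [Finset.sum_congr rfl fun v _ => const v]
    simp [ZMod.card, mul_comm]
  have hd0 : d 0 = 0 := by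
    have hN : (N : ℤ) ≠ 0 := Int.natCast_ne_zero.mpr (NeZero.ne N)
    exact (mul_eq_zero.mp hN0).resolve_left hN
  funext v
  have := const v
  rw [hd0] at this
  simp only [hd, sub_eq_zero] at this
  exact_mod_cast this.symm

/-- counts of the standard `b = (1^m, 0^{k-m})` -/
lemma cnt_b_one (h10 : (1 : ZMod N) ≠ 0) (hm : m ≤ k) :
    cnt (fun i : Fin k => if (i : ℕ) < m then (1 : ZMod N) else 0) 1 = m := by
  unfold cnt
  rw [Finset.filter_congr (q := fun i : Fin k => (i : ℕ) < m)
    (fun i _ => by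
      show (if (i : ℕ) < m then (1 : ZMod N) else 0) = 1 ↔ (i : ℕ) < m
      split
      · simp_all
      · exact iff_of_false (fun hh => h10 hh.symm) (by omega))]
  exact card_lt_val hm

lemma cnt_b_zero (h10 : (1 : ZMod N) ≠ 0) (hm : m ≤ k) :
    cnt (fun i : Fin k => if (i : ℕ) < m then (1 : ZMod N) else 0) 0 = k - m := by
  unfold cnt
  rw [Finset.filter_congr (q := fun i : Fin k => ¬ (i : ℕ) < m)
    (fun i _ => by
      show (if (i : ℕ) < m then (1 : ZMod N) else 0) = 0 ↔ ¬ (i : ℕ) < m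
      split <;> simp_all)]
  have := Finset.card_filter_add_card_filter_not
    (s := (Finset.univ : Finset (Fin k))) (p := fun i : Fin k => (i : ℕ) < m)
  rw [card_lt_val hm] at this
  simp only [Finset.card_univ, Fintype.card_fin] at this
  omega

lemma cnt_b_other (w : ZMod N) (hw0 : w ≠ 0) (hw1 : w ≠ 1) :
    cnt (fun i : Fin k => if (i : ℕ) < m then (1 : ZMod N) else 0) w = 0 := by
  unfold cnt
  rw [Finset.card_eq_zero, Finset.filter_eq_empty_iff]
  intro i _
  show ¬ (if (i : ℕ) < m then (1 : ZMod N) else 0) = w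
  split <;> simp_all [eq_comm]

lemma b_vals (i : Fin k) :
    (if (i : ℕ) < m then (1 : ZMod N) else 0) = 0 ∨
    (if (i : ℕ) < m then (1 : ZMod N) else 0) = 1 := by
  split <;> simp

/-- From any triple, extract the (valid) multiplicity-shift vector. -/
lemma extract_ms [NeZero N] (h10 : (1 : ZMod N) ≠ 0) (hm : m ≤ k)
    (a c : Fin k → ZMod N)
    (t : Triples a (fun i => if (i : ℕ) < m then 1 else 0) c) :
    (∀ v, jcnt t.1.1 t.1.2.1 v ≤ cnt a v) ∧ (∑ v, jcnt t.1.1 t.1.2.1 v) = m ∧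
      (∀ v, cnt c v = cnt a v - jcnt t.1.1 t.1.2.1 v + jcnt t.1.1 t.1.2.1 (v - 1)) := by
  obtain ⟨⟨x, y, z⟩, hx, hy, hz, hxyz⟩ := t
  simp only at hx hy hz hxyz ⊢
  have hcx : ∀ v, cnt x v = cnt a v := cnt_orb hx
  have hyv : ∀ i, y i = 0 ∨ y i = 1 := by
    obtain ⟨σ, rfl⟩ := hy
    intro i
    exact b_vals (σ i)
  have hy1 : cnt y 1 = m := by
    rw [cnt_orb hy 1]
    exact cnt_b_one h10 hm
  refine ⟨fun v => (hcx v) ▸ jcnt_le x y v, ?_, ?_⟩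
  · rw [sum_jcnt x y, hy1]
  · intro v
    rw [← cnt_orb hz v, ← hxyz, cnt_add x y hyv h10 v, hcx v]

/-- Two triples with equal joint counts are related by a simultaneous permutation. -/
lemma triples_rel (h10 : (1 : ZMod N) ≠ 0)
    {x y z x' y' z' : Fin k → ZMod N}
    (hy : ∀ i, y i = 0 ∨ y i = 1) (hy' : ∀ i, y' i = 0 ∨ y' i = 1)
    (hcx : ∀ v, cnt x v = cnt x' v)
    (hj : ∀ v, jcnt x y v = jcnt x' y' v)
    (hz : x + y = z) (hz' : x' + y' = z') :
    ∃ σ : Equiv.Perm (Fin k), x' = x ∘ σ ∧ y' = y ∘ σ ∧ z' = z ∘ σ := by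
  have key : ∀ p : ZMod N × ZMod N,
      (Finset.univ.filter fun i => (x i, y i) = p).card
        = (Finset.univ.filter fun i => (x' i, y' i) = p).card := by
    rintro ⟨v, w⟩
    have e1 : (Finset.univ.filter fun i => (x i, y i) = (v, w))
        = (Finset.univ.filter fun i => x i = v ∧ y i = w) := by
      apply Finset.filter_congr; intro i _; simp [Prod.ext_iff]
    have e2 : (Finset.univ.filter fun i => (x' i, y' i) = (v, w))
        = (Finset.univ.filter fun i => x' i = v ∧ y' i = w) := by
      apply Finset.filter_congr; intro i _; simp [Prod.ext_iff]
    rw [e1, e2]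
    by_cases hw1 : w = 1
    · subst hw1
      exact hj v
    by_cases hw0 : w = 0
    · subst hw0
      have s1 := cnt_split x y hy h10 v
      have s2 := cnt_split x' y' hy' h10 v
      have h3 := hcx v
      have h4 := hj v
      omega
    · rw [Finset.card_eq_zero.mpr, Finset.card_eq_zero.mpr]
      · rw [Finset.filter_eq_empty_iff]
        rintro i - ⟨-, h⟩
        rcases hy' i with h' | h' <;> rw [h'] at h
        · exact hw0 h.symm
        · exact hw1 h.symm
      · rw [Finset.filter_eq_empty_iff]
        rintro i - ⟨-, h⟩
        rcases hy i with h' | h' <;> rw [h'] at h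
        · exact hw0 h.symm
        · exact hw1 h.symm
  obtain ⟨σ, hσ⟩ := exists_perm_of_cnt (fun i => (x i, y i)) (fun i => (x' i, y' i)) key
  have hx1 : x' = x ∘ σ := by
    funext i
    exact congrArg Prod.fst (congrFun hσ i)
  have hy1 : y' = y ∘ σ := by
    funext i
    exact congrArg Prod.snd (congrFun hσ i)
  refine ⟨σ, hx1, hy1, ?_⟩
  rw [← hz', ← hz, hx1, hy1]
  rfl

/-- Construct a triple from a valid multiplicity-shift vector. -/
lemma construct [NeZero N] (h10 : (1 : ZMod N) ≠ 0) (hm : m ≤ k)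
    (a c : Fin k → ZMod N) (ms : ZMod N → ℕ)
    (hle : ∀ v, ms v ≤ cnt a v) (hsum : ∑ v, ms v = m)
    (hc : ∀ v, cnt c v = cnt a v - ms v + ms (v - 1)) :
    Nonempty (Triples a (fun i => if (i : ℕ) < m then 1 else 0) c) := by
  choose t ht1 ht2 using fun v =>
    Finset.exists_subset_card_eq
      (show ms v ≤ (Finset.univ.filter fun i => a i = v).card from hle v)
  set y : Fin k → ZMod N := fun i => if i ∈ t (a i) then 1 else 0 with hydef
  have hyv : ∀ i, y i = 0 ∨ y i = 1 := fun i => by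
    simp only [hydef]; split <;> simp
  have hfib : ∀ v, (Finset.univ.filter fun i => a i = v ∧ y i = 1) = t v := by
    intro v
    ext i
    simp only [mem_filter, mem_univ, true_and, hydef]
    constructor
    · rintro ⟨hav, hy1⟩
      rw [hav] at hy1
      by_cases h : i ∈ t v
      · exact h
      · rw [if_neg h] at hy1; exact absurd hy1.symm h10
    · intro hi
      have hav : a i = v := (Finset.mem_filter.mp (ht1 v hi)).2
      refine ⟨hav, ?_⟩
      rw [hav, if_pos hi]
  have hjc : ∀ v, jcnt a y v = ms v := by
    intro v
    unfold jcnt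
    rw [hfib v, ht2 v]
  have hy1 : cnt y 1 = m := by
    rw [← sum_jcnt a y, ← hsum]
    exact Finset.sum_congr rfl fun v _ => hjc v
  have hy0 : cnt y 0 = k - m := by
    have h01 := Finset.card_filter_add_card_filter_not
      (s := (Finset.univ : Finset (Fin k))) (p := fun i => y i = 1)
    have heq : (Finset.univ.filter fun i => ¬ y i = 1)
        = (Finset.univ.filter fun i => y i = 0) := by
      apply Finset.filter_congr
      intro i _
      rcases hyv i with h | h <;> simp [h, h10, Ne.symm h10]
    rw [heq] at h01
    have hy1' : (Finset.univ.filter fun i => y i = 1).card = m := hy1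
    unfold cnt
    simp only [Finset.card_univ, Fintype.card_fin] at h01
    omega
  have hyb : y ∈ orb (fun i : Fin k => if (i : ℕ) < m then (1 : ZMod N) else 0) := by
    apply mem_orb_of_cnt
    intro v
    by_cases hw1 : v = 1
    · subst hw1; rw [hy1, cnt_b_one h10 hm]
    by_cases hw0 : v = 0
    · subst hw0; rw [hy0, cnt_b_zero h10 hm]
    · rw [cnt_b_other v hw0 hw1]
      symm
      rw [cnt, Finset.card_eq_zero, Finset.filter_eq_empty_iff]
      intro i _
      rcases hyv i with h | h <;> rw [h]
      · exact fun hh => hw0 hh.symm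
      · exact fun hh => hw1 hh.symm
  have hzc : (a + y) ∈ orb c := by
    apply mem_orb_of_cnt
    intro v
    rw [cnt_add a y hyv h10 v, hjc v, hjc (v - 1)]
    exact hc v
  exact ⟨⟨(a, y, a + y), ⟨Equiv.refl _, rfl⟩, hyb, hzc, rfl⟩⟩

end Stmt2Aux

open Stmt2Aux in
/-- Characterization of the orbit coefficients `M_{[a],[b]}^{(k)[c]}` when
`[b] = [(1^m,0^{k-m})]`: the coefficient is `1` exactly when the multiplicities
of the standard representative of `[c]` are `a_j - m_j + m_{j-1}` (indices mod `N`)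
for suitable integers `0 ≤ m_j ≤ a_j` with `∑ m_j = m`, and `0` otherwise. -/
theorem stmt2 (N k m : ℕ) [NeZero N] (hN : 2 ≤ N) (hk : 1 ≤ k) (hm : m ≤ k)
    (a c : Fin k → ZMod N)
    (ha : ∀ i j : Fin k, i ≤ j → (a j).val ≤ (a i).val) :
    (Mcoef a (fun i => if (i : ℕ) < m then 1 else 0) c = 1 ↔
      ∃ ms : ZMod N → ℕ, (∀ v, ms v ≤ cnt a v) ∧ (∑ v, ms v) = m ∧
        ∀ v, cnt c v = cnt a v - ms v + ms (v - 1)) ∧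
    ((¬ ∃ ms : ZMod N → ℕ, (∀ v, ms v ≤ cnt a v) ∧ (∑ v, ms v) = m ∧
        ∀ v, cnt c v = cnt a v - ms v + ms (v - 1)) →
      Mcoef a (fun i => if (i : ℕ) < m then 1 else 0) c = 0) := by
  have h10 : (1 : ZMod N) ≠ 0 := by
    haveI : Fact (1 < N) := ⟨hN⟩
    exact one_ne_zero
  constructor
  · constructor
    · intro h1
      obtain ⟨_, ⟨q⟩⟩ := Nat.card_eq_one_iff_unique.mp h1
      obtain ⟨t, -⟩ := Quot.exists_rep q
      obtain ⟨p1, p2, p3⟩ := extract_ms h10 hm a c t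
      exact ⟨_, p1, p2, p3⟩
    · rintro ⟨ms, hle, hsum, hc⟩
      rw [Mcoef, Nat.card_eq_one_iff_unique]
      constructor
      · constructor
        intro q1 q2
        obtain ⟨t1, rfl⟩ := Quot.exists_rep q1
        obtain ⟨t2, rfl⟩ := Quot.exists_rep q2
        obtain ⟨p1, p2, p3⟩ := extract_ms h10 hm a c t1
        obtain ⟨q1', q2', q3'⟩ := extract_ms h10 hm a c t2
        have hjeq : jcnt t1.1.1 t1.1.2.1 = jcnt t2.1.1 t2.1.2.1 :=
          ms_unique (A := cnt a) p1 q1' (by rw [p2, q2'])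
            (fun v => by rw [← p3 v, ← q3' v])
        have hy1v : ∀ i, t1.1.2.1 i = 0 ∨ t1.1.2.1 i = 1 := by
          obtain ⟨σ, hσ⟩ := t1.2.2.1
          intro i
          rw [hσ]
          exact b_vals (σ i)
        have hy2v : ∀ i, t2.1.2.1 i = 0 ∨ t2.1.2.1 i = 1 := by
          obtain ⟨σ, hσ⟩ := t2.2.2.1
          intro i
          rw [hσ]
          exact b_vals (σ i)
        have hcx : ∀ v, cnt t1.1.1 v = cnt t2.1.1 v := by
          intro v
          rw [cnt_orb t1.2.1 v, cnt_orb t2.2.1 v]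
        obtain ⟨σ, hxσ, hyσ, hzσ⟩ := triples_rel h10 hy1v hy2v hcx
          (fun v => by rw [hjeq]) t1.2.2.2.2 t2.2.2.2.2
        exact Quot.sound ⟨σ, hxσ, hyσ, hzσ⟩
      · obtain ⟨t⟩ := construct h10 hm a c ms hle hsum hc
        exact ⟨Quot.mk _ t⟩
  · intro hnex
    rw [Mcoef]
    have hE : IsEmpty (Triples a (fun i => if (i : ℕ) < m then 1 else 0) c) := by
      constructor
      intro t
      obtain ⟨p1, p2, p3⟩ := extract_ms h10 hm a c t
      exact hnex ⟨_, p1, p2, p3⟩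
    haveI : IsEmpty (Quot (fun p q : Triples a (fun i => if (i : ℕ) < m then 1 else 0) c =>
        ∃ σ : Equiv.Perm (Fin k),
          q.1.1 = p.1.1 ∘ σ ∧ q.1.2.1 = p.1.2.1 ∘ σ ∧ q.1.2.2 = p.1.2.2 ∘ σ)) := by
      constructor
      intro q
      obtain ⟨t, -⟩ := Quot.exists_rep q
      exact hE.false t
    exact Nat.card_of_isEmpty
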